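/- arXiv:1512.08160 — 2 statements merged into one kernel-verified Lean document; each statement's English description precedes it below -/
import Mathlib

section
/- Let p > 2, a > 0, ℓ > 0, M > 0, and let B = B_{2R}(X₀) ⊂ ℝ^N be a ball. Suppose u ∈ L^∞(B) with |u| ≤ M a.e., χ : B → [0,1] is measurable, and V, W ∈ L^p(B; ℝ^N) satisfy the two identities ∫_B ‖V‖^{p−2} V · (V − W) = ∫_B (a u + ℓ χ)(V_N − W_N) and ∫_B ‖W‖^{p−2} W · (V − W) = 0 (which hold when V = ∇u for a weak solution u of Δ_p u = ∂_z β(u) in B and W = ∇v for the p-harmonic replacement v of u in B, tested with u − v). Then there is a constant C > 0 depending only on p, N, a, ℓ, M such that ∫_B ‖V − W‖^p ≤ C R^N; consequently there is a constant C' > 0 of the same dependence with ∫_B ‖V − W‖² ≤ C' R^N. -/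
/-!
Subtracting the two identities turns the left-hand side into
`∫ (|V|^{p-2} V - |W|^{p-2} W) · (V - W)`, which by the coercivity of `ξ ↦ |ξ|^{p-2} ξ` for
`p ≥ 2` dominates `2^{1-p} ∫ |V - W|^p`. The right-hand side is at most `(a M + ℓ) ∫ |V - W|`,
and Hölder's inequality bounds this by `(a M + ℓ) (∫ |V - W|^p)^{1/p} |B|^{1/p'}`. Absorbing
the power `1/p < 1` of `∫ |V - W|^p` gives `∫ |V - W|^p ≲ |B| ≈ R^N`; the quadratic bound
follows from `t² ≤ t^p + 1`.
-/

open MeasureTheory Metric Set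
open scoped RealInnerProductSpace

namespace Real

lemma rpow_sub_rpow_mul_sq_sub_sq_nonneg {p x y : ℝ} (hp : 2 ≤ p) (hx : 0 ≤ x) (hy : 0 ≤ y) :
    0 ≤ (x ^ (p - 2) - y ^ (p - 2)) * (x ^ 2 - y ^ 2) := by
  have hp2 : 0 ≤ p - 2 := by linarith
  rcases le_total y x with h | h
  · exact mul_nonneg (sub_nonneg.2 (rpow_le_rpow hy h hp2))
      (sub_nonneg.2 (pow_le_pow_left₀ hy h 2))
  · exact mul_nonneg_of_nonpos_of_nonpos (sub_nonpos.2 (rpow_le_rpow hx h hp2))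
      (sub_nonpos.2 (pow_le_pow_left₀ hx h 2))

lemma two_rpow_two_sub_mul_rpow_le {p d x y : ℝ} (hp : 2 ≤ p) (hd : 0 ≤ d) (hx : 0 ≤ x)
    (hy : 0 ≤ y) (hdxy : d ≤ x + y) :
    2 ^ (2 - p) * d ^ p ≤ (x ^ (p - 2) + y ^ (p - 2)) * d ^ 2 := by
  have hp2 : 0 ≤ p - 2 := by linarith
  have hdp : d ^ p = d ^ (p - 2) * d ^ 2 := by
    rw [← rpow_two, ← rpow_add_of_nonneg hd hp2 zero_le_two, sub_add_cancel]
  have hsplit : 2 ^ (2 - p) * d ^ p = (d / 2) ^ (p - 2) * d ^ 2 := by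
    rw [hdp, div_rpow hd zero_le_two, show (2 : ℝ) - p = -(p - 2) by ring, rpow_neg zero_le_two]
    ring
  have hhalf : (d / 2) ^ (p - 2) ≤ x ^ (p - 2) + y ^ (p - 2) := by
    rcases le_total x y with h | h
    · exact (rpow_le_rpow (by positivity) (by linarith) hp2).trans
        (le_add_of_nonneg_left (by positivity))
    · exact (rpow_le_rpow (by positivity) (by linarith) hp2).trans
        (le_add_of_nonneg_right (by positivity))
  rw [hsplit]
  gcongr

lemma sq_le_rpow_add_one {p x : ℝ} (hp : 2 ≤ p) (hx : 0 ≤ x) : x ^ 2 ≤ x ^ p + 1 := by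
  rcases le_total x 1 with h | h
  · linarith [pow_le_one₀ hx h (n := 2), rpow_nonneg hx p]
  · linarith [rpow_two x ▸ rpow_le_rpow_of_exponent_le h hp]

lemma le_div_rpow_mul_of_mul_le_mul_rpow {p q c K A I : ℝ} (hpq : p.HolderConjugate q)
    (hc : 0 < c) (hK : 0 ≤ K) (hA : 0 ≤ A) (hI : 0 ≤ I)
    (h : c * I ≤ K * (I ^ (1 / p) * A ^ (1 / q))) :
    I ≤ (K / c) ^ q * A := by
  rcases hI.eq_or_lt with rfl | hIpos
  · positivity
  have hsplit : I ^ (1 / q) * I ^ (1 / p) = I := by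
    rw [← rpow_add hIpos, one_div, one_div, add_comm, hpq.inv_add_inv_eq_one, rpow_one]
  have hq : c * I ^ (1 / q) ≤ K * A ^ (1 / q) := by
    refine le_of_mul_le_mul_right ?_ (rpow_pos_of_pos hIpos (1 / p))
    calc c * I ^ (1 / q) * I ^ (1 / p) = c * I := by rw [mul_assoc, hsplit]
      _ ≤ K * (I ^ (1 / p) * A ^ (1 / q)) := h
      _ = K * A ^ (1 / q) * I ^ (1 / p) := by ring
  have hq' : I ^ (1 / q) ≤ K / c * A ^ (1 / q) := by
    rw [div_mul_eq_mul_div, le_div_iff₀ hc]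
    linarith
  calc I = (I ^ (1 / q)) ^ q := by
        rw [← rpow_mul hI, one_div_mul_cancel hpq.symm.ne_zero, rpow_one]
    _ ≤ (K / c * A ^ (1 / q)) ^ q := rpow_le_rpow (by positivity) hq' hpq.symm.nonneg
    _ = (K / c) ^ q * A := by
        rw [mul_rpow (by positivity) (by positivity), ← rpow_mul hA,
          one_div_mul_cancel hpq.symm.ne_zero, rpow_one]

end Real

section Coercivity

variable {E : Type*} [NormedAddCommGroup E] [InnerProductSpace ℝ E]

theorem two_rpow_one_sub_mul_norm_sub_rpow_le {p : ℝ} (hp : 2 ≤ p) (ξ η : E) :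
    2 ^ (1 - p) * ‖ξ - η‖ ^ p ≤ ‖ξ‖ ^ (p - 2) * ⟪ξ, ξ - η⟫ - ‖η‖ ^ (p - 2) * ⟪η, ξ - η⟫ := by
  have hid : ‖ξ‖ ^ (p - 2) * ⟪ξ, ξ - η⟫ - ‖η‖ ^ (p - 2) * ⟪η, ξ - η⟫
      = ((‖ξ‖ ^ (p - 2) + ‖η‖ ^ (p - 2)) * ‖ξ - η‖ ^ 2
        + (‖ξ‖ ^ (p - 2) - ‖η‖ ^ (p - 2)) * (‖ξ‖ ^ 2 - ‖η‖ ^ 2)) / 2 := by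
    rw [inner_sub_right, inner_sub_right, real_inner_self_eq_norm_sq, real_inner_self_eq_norm_sq,
      real_inner_comm ξ η, norm_sub_sq_real]
    ring
  have hsign := Real.rpow_sub_rpow_mul_sq_sub_sq_nonneg hp (norm_nonneg ξ) (norm_nonneg η)
  have hmain := Real.two_rpow_two_sub_mul_rpow_le hp (norm_nonneg (ξ - η)) (norm_nonneg ξ)
    (norm_nonneg η) (norm_sub_le ξ η)
  have htwo : (2 : ℝ) ^ (2 - p) = 2 * 2 ^ (1 - p) := by
    rw [show 2 - p = 1 + (1 - p) by ring, Real.rpow_add two_pos, Real.rpow_one]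
  rw [hid]
  rw [htwo] at hmain
  linarith

lemma abs_rpow_norm_mul_inner_le {p : ℝ} (hp : 1 < p) (g h : E) :
    |‖g‖ ^ (p - 2) * ⟪g, h⟫| ≤ ‖g‖ ^ p / p.conjExponent + ‖h‖ ^ p / p := by
  have hpq := Real.HolderConjugate.conjExponent hp
  calc |‖g‖ ^ (p - 2) * ⟪g, h⟫| = ‖g‖ ^ (p - 2) * |⟪g, h⟫| := by
        rw [abs_mul, abs_of_nonneg (by positivity)]
    _ ≤ ‖g‖ ^ (p - 2) * (‖g‖ * ‖h‖) := by gcongr; exact abs_real_inner_le_norm g h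
    _ = ‖g‖ ^ (p - 1) * ‖h‖ := by
        rw [← mul_assoc, ← Real.rpow_add_one' (norm_nonneg g) (by linarith)]
        ring_nf
    _ ≤ (‖g‖ ^ (p - 1)) ^ p.conjExponent / p.conjExponent + ‖h‖ ^ p / p :=
        Real.young_inequality_of_nonneg (by positivity) (norm_nonneg h) hpq.symm
    _ = ‖g‖ ^ p / p.conjExponent + ‖h‖ ^ p / p := by
        rw [← Real.rpow_mul (norm_nonneg g), hpq.sub_one_mul_conj]

end Coercivity

section Integrals

variable {α E F : Type*} [MeasurableSpace α] {μ : Measure α}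
  [NormedAddCommGroup E] [InnerProductSpace ℝ E] [NormedAddCommGroup F]

lemma MeasureTheory.MemLp.integrable_norm_rpow_ofReal {p : ℝ} (hp : 0 < p) {f : α → F}
    (hf : MemLp f (ENNReal.ofReal p) μ) : Integrable (fun x => ‖f x‖ ^ p) μ := by
  simpa [ENNReal.toReal_ofReal hp.le] using
    hf.integrable_norm_rpow (by simpa using hp) ENNReal.ofReal_ne_top

lemma integrable_rpow_norm_mul_inner {p : ℝ} (hp : 1 < p) {G H : α → E}
    (hG : MemLp G (ENNReal.ofReal p) μ) (hH : MemLp H (ENNReal.ofReal p) μ) :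
    Integrable (fun x => ‖G x‖ ^ (p - 2) * ⟪G x, H x⟫) μ := by
  refine (((hG.integrable_norm_rpow_ofReal (by linarith)).div_const _).add
    ((hH.integrable_norm_rpow_ofReal (by linarith)).div_const p)).mono' ?_
    (.of_forall fun x => abs_rpow_norm_mul_inner_le hp (G x) (H x))
  exact (hG.1.norm.aemeasurable.pow_const _).aestronglyMeasurable.mul
    (hG.1.inner hH.1)

theorem two_rpow_one_sub_mul_integral_norm_sub_rpow_le {p : ℝ} (hp : 2 ≤ p) {V W : α → E}
    (hV : MemLp V (ENNReal.ofReal p) μ) (hW : MemLp W (ENNReal.ofReal p) μ) :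
    2 ^ (1 - p) * ∫ x, ‖V x - W x‖ ^ p ∂μ ≤
      (∫ x, ‖V x‖ ^ (p - 2) * ⟪V x, V x - W x⟫ ∂μ)
        - ∫ x, ‖W x‖ ^ (p - 2) * ⟪W x, V x - W x⟫ ∂μ := by
  have hVW : MemLp (fun x => V x - W x) (ENNReal.ofReal p) μ := hV.sub hW
  rw [← integral_const_mul, ← integral_sub (integrable_rpow_norm_mul_inner (by linarith) hV hVW)
    (integrable_rpow_norm_mul_inner (by linarith) hW hVW)]
  exact integral_mono ((hVW.integrable_norm_rpow_ofReal (by linarith)).const_mul _)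
    ((integrable_rpow_norm_mul_inner (by linarith) hV hVW).sub
      (integrable_rpow_norm_mul_inner (by linarith) hW hVW))
    fun x => two_rpow_one_sub_mul_norm_sub_rpow_le hp (V x) (W x)

lemma integral_norm_le_integral_norm_rpow_mul_measureReal [IsFiniteMeasure μ] {p q : ℝ}
    (hpq : p.HolderConjugate q) {f : α → F} (hf : MemLp f (ENNReal.ofReal p) μ) :
    ∫ x, ‖f x‖ ∂μ ≤ (∫ x, ‖f x‖ ^ p ∂μ) ^ (1 / p) * μ.real univ ^ (1 / q) := by
  simpa [integral_const] using integral_mul_norm_le_Lp_mul_Lq hpq hf.norm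
    (memLp_const 1 : MemLp (fun _ => (1 : ℝ)) (ENNReal.ofReal q) μ)

theorem integral_norm_sub_rpow_le_of_le_mul_integral_norm [IsFiniteMeasure μ] {p K : ℝ}
    (hp : 2 ≤ p) (hK : 0 ≤ K) {V W : α → E}
    (hV : MemLp V (ENNReal.ofReal p) μ) (hW : MemLp W (ENNReal.ofReal p) μ)
    (h : (∫ x, ‖V x‖ ^ (p - 2) * ⟪V x, V x - W x⟫ ∂μ)
        - ∫ x, ‖W x‖ ^ (p - 2) * ⟪W x, V x - W x⟫ ∂μ ≤ K * ∫ x, ‖V x - W x‖ ∂μ) :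
    ∫ x, ‖V x - W x‖ ^ p ∂μ ≤ (K / 2 ^ (1 - p)) ^ p.conjExponent * μ.real univ := by
  have hpq := Real.HolderConjugate.conjExponent (show 1 < p by linarith)
  refine Real.le_div_rpow_mul_of_mul_le_mul_rpow hpq (by positivity) hK measureReal_nonneg
    (integral_nonneg fun x => by positivity) ?_
  calc 2 ^ (1 - p) * ∫ x, ‖V x - W x‖ ^ p ∂μ ≤ _ :=
        two_rpow_one_sub_mul_integral_norm_sub_rpow_le hp hV hW
    _ ≤ K * ∫ x, ‖V x - W x‖ ∂μ := h
    _ ≤ _ := mul_le_mul_of_nonneg_left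
        (integral_norm_le_integral_norm_rpow_mul_measureReal hpq (hV.sub hW)) hK

lemma integral_norm_sq_le_integral_norm_rpow_add [IsFiniteMeasure μ] {p : ℝ} (hp : 2 ≤ p)
    {f : α → F} (hf : MemLp f (ENNReal.ofReal p) μ) :
    ∫ x, ‖f x‖ ^ 2 ∂μ ≤ ∫ x, ‖f x‖ ^ p ∂μ + μ.real univ := by
  have hint := hf.integrable_norm_rpow_ofReal (by linarith)
  calc ∫ x, ‖f x‖ ^ 2 ∂μ ≤ ∫ x, (‖f x‖ ^ p + 1) ∂μ :=
        integral_mono_of_nonneg (.of_forall fun x => by positivity) (hint.add (integrable_const 1))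
          (.of_forall fun x => Real.sq_le_rpow_add_one hp (norm_nonneg _))
    _ = ∫ x, ‖f x‖ ^ p ∂μ + μ.real univ := by
        rw [integral_add hint (integrable_const 1), integral_const, smul_eq_mul, mul_one]

end Integrals

lemma MeasureTheory.Measure.addHaar_real_ball_of_pos {E : Type*} [NormedAddCommGroup E]
    [NormedSpace ℝ E] [MeasurableSpace E] [BorelSpace E] [FiniteDimensional ℝ E] (μ : Measure E)
    [μ.IsAddHaarMeasure] (x : E) {r : ℝ} (hr : 0 < r) :
    μ.real (ball x r) = r ^ Module.finrank ℝ E * μ.real (ball 0 1) := by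
  simp [measureReal_def, Measure.addHaar_ball_of_pos μ x hr, ENNReal.toReal_mul, hr.le]

lemma abs_mul_apply_sub_le {N : ℕ} {a ℓ M s t : ℝ} (ha : 0 ≤ a) (hℓ : 0 ≤ ℓ) (hs : |s| ≤ M)
    (ht : t ∈ Icc (0 : ℝ) 1) (v w : EuclideanSpace ℝ (Fin N)) (i : Fin N) :
    |(a * s + ℓ * t) * (v i - w i)| ≤ (a * M + ℓ) * ‖v - w‖ := by
  obtain ⟨hsl, hsu⟩ := abs_le.1 hs
  have hcoef : |a * s + ℓ * t| ≤ a * M + ℓ := by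
    refine abs_le.2 ⟨?_, ?_⟩ <;>
      nlinarith [mul_nonneg ha (by linarith : 0 ≤ s + M), mul_nonneg ha (by linarith : 0 ≤ M - s),
        mul_nonneg hℓ ht.1, mul_nonneg hℓ (sub_nonneg.2 ht.2)]
  have hcoord : |v i - w i| ≤ ‖v - w‖ := by
    simpa [Real.norm_eq_abs] using PiLp.norm_apply_le (v - w) i
  rw [abs_mul]
  exact mul_le_mul hcoef hcoord (abs_nonneg _) ((abs_nonneg _).trans hcoef)

/-- Comparison estimate with the `p`-harmonic replacement, `p > 2`:
if `V` and `W` satisfy the two integral identities coming from testing a weak solution of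
`Δ_p u = ∂_z β(u)` against its `p`-harmonic replacement on `B = B_{2R}(X₀)`, then
`∫_B ‖V − W‖^p ≤ C R^N` and `∫_B ‖V − W‖² ≤ C' R^N`, with `C, C'` depending only on
`p, N, a, ℓ, M`. -/
theorem comparison_estimate_p_ge_two
    (N : ℕ) (hN : 2 ≤ N)
    (p a ℓ M : ℝ) (hp : 2 < p) (ha : 0 < a) (hℓ : 0 < ℓ) (hM : 0 < M) :
    ∃ c : ℝ, 0 < c ∧ ∃ c' : ℝ, 0 < c' ∧
      ∀ (R : ℝ), 0 < R → ∀ (X₀ : EuclideanSpace ℝ (Fin N))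
        (u χ : EuclideanSpace ℝ (Fin N) → ℝ)
        (V W : EuclideanSpace ℝ (Fin N) → EuclideanSpace ℝ (Fin N)),
        (∀ᵐ X ∂(volume.restrict (ball X₀ (2 * R))), |u X| ≤ M) →
        Measurable χ → (∀ X, χ X ∈ Icc (0:ℝ) 1) →
        MemLp V (ENNReal.ofReal p) (volume.restrict (ball X₀ (2 * R))) →
        MemLp W (ENNReal.ofReal p) (volume.restrict (ball X₀ (2 * R))) →
        (∫ X in ball X₀ (2 * R), ‖V X‖ ^ (p - 2) * ⟪V X, V X - W X⟫
          = ∫ X in ball X₀ (2 * R),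
              (a * u X + ℓ * χ X) * (V X ⟨N - 1, by omega⟩ - W X ⟨N - 1, by omega⟩)) →
        (∫ X in ball X₀ (2 * R), ‖W X‖ ^ (p - 2) * ⟪W X, V X - W X⟫ = 0) →
        (∫ X in ball X₀ (2 * R), ‖V X - W X‖ ^ p ≤ c * R ^ (N : ℝ)) ∧
        (∫ X in ball X₀ (2 * R), ‖V X - W X‖ ^ 2 ≤ c' * R ^ (N : ℝ)) := by
  set κ := volume.real (ball (0 : EuclideanSpace ℝ (Fin N)) 1)
  have hκ : 0 < κ := ENNReal.toReal_pos (measure_ball_pos volume 0 one_pos).ne'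
    measure_ball_lt_top.ne
  set C := ((a * M + ℓ) / 2 ^ (1 - p)) ^ p.conjExponent * (2 ^ N * κ)
  refine ⟨C, by positivity, C + 2 ^ N * κ, by positivity, ?_⟩
  intro R hR X₀ u χ V W hu _ hχ hV hW hVid hWid
  have : IsFiniteMeasure (volume.restrict (ball X₀ (2 * R))) :=
    isFiniteMeasure_restrict.2 measure_ball_lt_top.ne
  have hvol : (volume.restrict (ball X₀ (2 * R))).real univ = 2 ^ N * κ * R ^ (N : ℝ) := by
    rw [measureReal_restrict_apply_univ, Measure.addHaar_real_ball_of_pos volume X₀ (by positivity),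
      finrank_euclideanSpace_fin, mul_pow, Real.rpow_natCast]
    ring
  have hVW : MemLp (fun X => V X - W X) (ENNReal.ofReal p) (volume.restrict (ball X₀ (2 * R))) :=
    hV.sub hW
  have hdefect : (∫ X in ball X₀ (2 * R), ‖V X‖ ^ (p - 2) * ⟪V X, V X - W X⟫)
      - ∫ X in ball X₀ (2 * R), ‖W X‖ ^ (p - 2) * ⟪W X, V X - W X⟫
      ≤ (a * M + ℓ) * ∫ X in ball X₀ (2 * R), ‖V X - W X‖ := by
    rw [hVid, hWid, sub_zero, ← integral_const_mul]
    refine (Real.le_norm_self _).trans (norm_integral_le_of_norm_le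
      ((hVW.integrable (by simpa using hp.le.trans' one_le_two)).norm.const_mul _) ?_)
    filter_upwards [hu] with X hX
    exact (Real.norm_eq_abs _).trans_le <| abs_mul_apply_sub_le ha.le hℓ.le hX (hχ X) (V X) (W X) _
  have hLp := integral_norm_sub_rpow_le_of_le_mul_integral_norm hp.le (by positivity) hV hW hdefect
  rw [hvol] at hLp
  constructor
  · calc _ ≤ _ := hLp
      _ = C * R ^ (N : ℝ) := by ring
  · calc _ ≤ _ := integral_norm_sq_le_integral_norm_rpow_add hp.le hVW
      _ ≤ C * R ^ (N : ℝ) + 2 ^ N * κ * R ^ (N : ℝ) := by rw [hvol]; linarith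
      _ = (C + 2 ^ N * κ) * R ^ (N : ℝ) := by ring
end

section
/- Let N ≥ 1, X₀ ∈ ℝ^N, ρ > 0, K ≥ 0, and let u be a real-valued C¹ function on the closed ball of radius ρ around X₀ with u(X₀) = 0. Suppose that for every 0 < t ≤ ρ one has ∫_{B_t(X₀)} ‖∇u(X) − (∇u)_{X₀,t}‖ dX ≤ K t^N, where (∇u)_{X₀,t} = ⨍_{B_t(X₀)} ∇u. Then | ∫_{B_ρ(X₀)} u | ≤ K ρ^{N+1}; equivalently, ρ^{−N} | ∫_{B_ρ(X₀)} u | ≤ K ρ. -/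
open MeasureTheory Metric Set Filter
open scoped RealInnerProductSpace Topology

/-!
Writing `u x = ∫₀¹ ⟪∇u (c + s • (x - c)), x - c⟫ ds` and exchanging the integrals, the
substitution `y = c + s • (x - c)` turns the `s`-slice into
`s^{-(d+1)} ∫_{B_{sρ}(c)} ⟪∇u y, y - c⟫ dy`. As `y ↦ ⟪a, y - c⟫` is odd about `c`, the gradient may
be replaced there by `∇u - (∇u)_{c,sρ}`, so the slice is at most
`s^{-(d+1)} · sρ · K (sρ)^d = K ρ^{d+1}`, uniformly in `s`.
-/

open Module

section Haar

variable {E F : Type*} [NormedAddCommGroup E] [MeasurableSpace E] [BorelSpace E] (μ : Measure E)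
  [NormedAddCommGroup F] [NormedSpace ℝ F]

theorem setIntegral_ball_comp_sub [μ.IsAddRightInvariant] (f : E → F) (c : E) (r : ℝ) :
    ∫ x in ball c r, f (x - c) ∂μ = ∫ z in ball 0 r, f z ∂μ := by
  have hball : (fun x => x - c) ⁻¹' ball 0 r = ball c r := by
    ext x
    simp [dist_eq_norm]
  rw [← (measurePreserving_sub_right μ c).setIntegral_preimage_emb
    (measurableEmbedding_subRight c) f, hball]

variable [NormedSpace ℝ E] [FiniteDimensional ℝ E] [μ.IsAddHaarMeasure]

theorem setIntegral_ball_comp_homothety (f : E → F) (c : E) {s : ℝ} (hs : 0 < s) (r : ℝ) :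
    ∫ x in ball c r, f (c + s • (x - c)) ∂μ
      = (s ^ finrank ℝ E)⁻¹ • ∫ y in ball c (s * r), f y ∂μ := by
  rw [setIntegral_ball_comp_sub μ (fun z => f (c + s • z)),
    Measure.setIntegral_comp_smul_of_pos μ (fun y => f (c + y)) _ hs,
    _root_.smul_ball hs.ne', smul_zero, Real.norm_of_nonneg hs.le,
    ← setIntegral_ball_comp_sub μ (fun y => f (c + y)) c]
  simp only [add_sub_cancel]

end Haar

section Gradient

variable {E : Type*} [NormedAddCommGroup E] [InnerProductSpace ℝ E] [CompleteSpace E]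
  {f : E → ℝ} {s : Set E}

theorem ContDiffOn.continuousOn_gradient (hf : ContDiffOn ℝ 1 f s) (hs : IsOpen s) :
    ContinuousOn (gradient f) s :=
  (InnerProductSpace.toDual ℝ E).symm.continuous.comp_continuousOn
    (hf.continuousOn_fderiv_of_isOpen hs le_rfl)

theorem ContDiffOn.exists_bound_gradient_interior (hf : ContDiffOn ℝ 1 f s) (hs : IsCompact s)
    (hs' : UniqueDiffOn ℝ s) : ∃ M, ∀ x ∈ interior s, ‖gradient f x‖ ≤ M := by
  obtain ⟨M, hM⟩ := hs.exists_bound_of_continuousOn (hf.continuousOn_fderivWithin hs' le_rfl)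
  refine ⟨M, fun x hx => ?_⟩
  rw [gradient, LinearIsometryEquiv.norm_map,
    ← fderivWithin_of_mem_nhds (mem_interior_iff_mem_nhds.1 hx)]
  exact hM x (interior_subset hx)

theorem sub_eq_integral_inner_gradient (hf : ContDiffOn ℝ 1 f s) (hs : IsOpen s) {x y : E}
    (hxy : segment ℝ x y ⊆ s) :
    f y - f x = ∫ t in (0:ℝ)..1, ⟪gradient f (x + t • (y - x)), y - x⟫ := by
  have hmem : ∀ t ∈ uIcc (0:ℝ) 1, x + t • (y - x) ∈ s := fun t ht =>
    hxy (segment_eq_image' ℝ x y ▸ mem_image_of_mem _ (by rwa [uIcc_of_le zero_le_one] at ht))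
  have hline : ∀ t : ℝ, HasDerivAt (fun t : ℝ => x + t • (y - x)) (y - x) t := fun t => by
    simpa using ((hasDerivAt_id t).smul_const (y - x)).const_add x
  have hderiv : ∀ t ∈ uIcc (0:ℝ) 1, HasDerivAt (fun t => f (x + t • (y - x)))
      ⟪gradient f (x + t • (y - x)), y - x⟫ t := fun t ht => by
    rw [inner_gradient_left]
    exact ((hf.differentiableOn one_ne_zero _ (hmem t ht)).differentiableAt
      (hs.mem_nhds (hmem t ht))).hasFDerivAt.comp_hasDerivAt t (hline t)
  have hcont : ContinuousOn (fun t : ℝ => ⟪gradient f (x + t • (y - x)), y - x⟫) (uIcc 0 1) :=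
    ((hf.continuousOn_gradient hs).comp
      (continuous_iff_continuousAt.2 fun t => (hline t).continuousAt).continuousOn hmem).inner
      continuousOn_const
  rw [intervalIntegral.integral_eq_sub_of_hasDerivAt hderiv hcont.intervalIntegrable]
  simp

end Gradient

section InnerHaar

variable {E : Type*} [NormedAddCommGroup E] [InnerProductSpace ℝ E] [FiniteDimensional ℝ E]
  [MeasurableSpace E] [BorelSpace E] (μ : Measure E) [μ.IsAddHaarMeasure]

theorem setIntegral_ball_inner_sub_eq_zero (a c : E) (r : ℝ) :
    ∫ x in ball c r, ⟪a, x - c⟫ ∂μ = 0 := by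
  rw [setIntegral_ball_comp_sub μ (fun z => ⟪a, z⟫)]
  have h := (Measure.measurePreserving_neg μ).setIntegral_preimage_emb measurableEmbedding_neg
    (fun z => ⟪a, z⟫) (ball 0 r)
  simp only [Set.neg_preimage, neg_ball, neg_zero, inner_neg_right, integral_neg] at h
  linarith

theorem abs_setIntegral_ball_inner_sub_le {g : E → E} {c : E} {r : ℝ}
    (hg : IntegrableOn g (ball c r) μ) :
    |∫ x in ball c r, ⟪g x, x - c⟫ ∂μ|
      ≤ r * ∫ x in ball c r, ‖g x - ⨍ y in ball c r, g y ∂μ‖ ∂μ := by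
  set A := ⨍ y in ball c r, g y ∂μ
  have hdist : ∀ x ∈ ball c r, ‖x - c‖ ≤ r := fun x hx => (mem_ball_iff_norm.1 hx).le
  have hgA : IntegrableOn (fun x => g x - A) (ball c r) μ :=
    hg.sub (integrableOn_const measure_ball_lt_top.ne)
  have hbound : ∀ x ∈ ball c r, ‖⟪g x - A, x - c⟫‖ ≤ ‖g x - A‖ * r := fun x hx =>
    (norm_inner_le_norm _ _).trans (mul_le_mul_of_nonneg_left (hdist x hx) (norm_nonneg _))
  have hint : IntegrableOn (fun x => ⟪g x - A, x - c⟫) (ball c r) μ :=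
    Integrable.mono' (hgA.norm.mul_const r)
      (hgA.aestronglyMeasurable.inner (continuous_id.sub continuous_const).aestronglyMeasurable)
      (ae_restrict_of_forall_mem measurableSet_ball hbound)
  have hlin : IntegrableOn (fun x => ⟪A, x - c⟫) (ball c r) μ :=
    ((continuous_const.inner (continuous_id.sub continuous_const)).continuousOn
      |>.integrableOn_compact (isCompact_closedBall c r)).mono_set ball_subset_closedBall
  have hcenter : ∫ x in ball c r, ⟪g x, x - c⟫ ∂μ = ∫ x in ball c r, ⟪g x - A, x - c⟫ ∂μ := by
    rw [← add_zero (∫ x in ball c r, ⟪g x - A, x - c⟫ ∂μ),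
      ← setIntegral_ball_inner_sub_eq_zero μ A c r, ← integral_add hint hlin]
    simp only [← inner_add_left, sub_add_cancel]
  calc |∫ x in ball c r, ⟪g x, x - c⟫ ∂μ|
      = ‖∫ x in ball c r, ⟪g x - A, x - c⟫ ∂μ‖ := by rw [hcenter, Real.norm_eq_abs]
    _ ≤ ∫ x in ball c r, ‖g x - A‖ * r ∂μ :=
      (norm_integral_le_integral_norm _).trans
        (setIntegral_mono_on hint.norm (hgA.norm.mul_const r) measurableSet_ball hbound)
    _ = r * ∫ x in ball c r, ‖g x - A‖ ∂μ := by rw [integral_mul_const, mul_comm]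

theorem abs_setIntegral_ball_inner_comp_homothety_le {g : E → E} {c : E} {r s K : ℝ}
    (hr : 0 ≤ r) (hs : 0 < s) (hg : IntegrableOn g (ball c (s * r)) μ)
    (hosc : ∫ x in ball c (s * r), ‖g x - ⨍ y in ball c (s * r), g y ∂μ‖ ∂μ
      ≤ K * (s * r) ^ finrank ℝ E) :
    |∫ x in ball c r, ⟪g (c + s • (x - c)), x - c⟫ ∂μ| ≤ K * r ^ (finrank ℝ E + 1) := by
  have hrescale : ∫ x in ball c r, ⟪g (c + s • (x - c)), x - c⟫ ∂μ
      = s⁻¹ * ∫ x in ball c r, (fun y => ⟪g y, y - c⟫) (c + s • (x - c)) ∂μ := by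
    rw [← integral_const_mul]
    congr with x
    simp only [add_sub_cancel_left, inner_smul_right, inv_mul_cancel_left₀ hs.ne']
  rw [hrescale, setIntegral_ball_comp_homothety μ (fun y => ⟪g y, y - c⟫) c hs, smul_eq_mul,
    abs_mul, abs_mul, abs_of_pos (inv_pos.2 hs), abs_of_pos (inv_pos.2 (pow_pos hs _))]
  calc s⁻¹ * ((s ^ finrank ℝ E)⁻¹ * |∫ y in ball c (s * r), ⟪g y, y - c⟫ ∂μ|)
      ≤ s⁻¹ * ((s ^ finrank ℝ E)⁻¹ * ((s * r) * (K * (s * r) ^ finrank ℝ E))) := by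
        gcongr
        exact (abs_setIntegral_ball_inner_sub_le μ hg).trans
          (mul_le_mul_of_nonneg_left hosc (mul_nonneg hs.le hr))
    _ = K * r ^ (finrank ℝ E + 1) := by
        field_simp
        ring

theorem integrableOn_ball_prod_Ioc_inner_comp_homothety {g : E → E} {c : E} {ρ M : ℝ}
    (hg : ContinuousOn g (ball c ρ)) (hM : ∀ x ∈ ball c ρ, ‖g x‖ ≤ M) :
    IntegrableOn (fun p : E × ℝ => ⟪g (c + p.2 • (p.1 - c)), p.1 - c⟫)
      (ball c ρ ×ˢ Ioc 0 1) (μ.prod volume) := by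
  have hmaps : MapsTo (fun p : E × ℝ => c + p.2 • (p.1 - c)) (ball c ρ ×ˢ Ioc 0 1) (ball c ρ) :=
    fun p ⟨hx, hs⟩ => (convex_ball c ρ).add_smul_sub_mem (mem_ball_self (pos_of_mem_ball hx)) hx
      (Ioc_subset_Icc_self hs)
  have hcont : ContinuousOn (fun p : E × ℝ => ⟪g (c + p.2 • (p.1 - c)), p.1 - c⟫)
      (ball c ρ ×ˢ Ioc 0 1) :=
    (hg.comp (by fun_prop) hmaps).inner (by fun_prop)
  have hmeas : MeasurableSet (ball c ρ ×ˢ Ioc (0:ℝ) 1) := measurableSet_ball.prod measurableSet_Ioc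
  refine IntegrableOn.of_bound ?_ (hcont.aestronglyMeasurable hmeas) (M * ρ)
    (ae_restrict_of_forall_mem hmeas ?_)
  · rw [Measure.prod_prod]
    exact ENNReal.mul_lt_top measure_ball_lt_top measure_Ioc_lt_top
  · rintro ⟨x, s⟩ hp
    exact (norm_inner_le_norm _ _).trans (mul_le_mul (hM _ (hmaps hp))
      (mem_ball_iff_norm.1 hp.1).le (norm_nonneg _) ((norm_nonneg _).trans (hM _ (hmaps hp))))

theorem abs_setIntegral_ball_le_of_gradient_oscillation {u : E → ℝ} {c : E} {ρ K : ℝ}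
    (hρ : 0 < ρ) (hu : ContDiffOn ℝ 1 u (closedBall c ρ)) (hu0 : u c = 0)
    (hosc : ∀ t ∈ Ioc 0 ρ, ∫ x in ball c t, ‖gradient u x - ⨍ y in ball c t, gradient u y ∂μ‖ ∂μ
      ≤ K * t ^ finrank ℝ E) :
    |∫ x in ball c ρ, u x ∂μ| ≤ K * ρ ^ (finrank ℝ E + 1) := by
  have hu' := hu.mono ball_subset_closedBall
  have hcont := hu'.continuousOn_gradient isOpen_ball
  -- `C¹` up to the boundary bounds `∇u` on the open ball, which justifies Fubini below.
  obtain ⟨M, hM⟩ := hu.exists_bound_gradient_interior (isCompact_closedBall c ρ)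
    (uniqueDiffOn_convex (convex_closedBall c ρ)
      (by rw [interior_closedBall c hρ.ne']; exact nonempty_ball.2 hρ))
  rw [interior_closedBall c hρ.ne'] at hM
  have hradial : ∀ x ∈ ball c ρ,
      u x = ∫ s in Ioc (0:ℝ) 1, ⟪gradient u (c + s • (x - c)), x - c⟫ := fun x hx => by
    rw [← intervalIntegral.integral_of_le zero_le_one, ← sub_eq_integral_inner_gradient hu'
      isOpen_ball ((convex_ball c ρ).segment_subset (mem_ball_self hρ) hx), hu0, sub_zero]
  have hslice : ∀ s ∈ Ioc (0:ℝ) 1, ‖∫ x in ball c ρ, ⟪gradient u (c + s • (x - c)), x - c⟫ ∂μ‖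
      ≤ K * ρ ^ (finrank ℝ E + 1) := by
    rintro s ⟨hs0, hs1⟩
    have hsρ : s * ρ ≤ ρ := mul_le_of_le_one_left hρ.le hs1
    exact abs_setIntegral_ball_inner_comp_homothety_le μ hρ.le hs0
      (IntegrableOn.of_bound measure_ball_lt_top
        ((hcont.mono (ball_subset_ball hsρ)).aestronglyMeasurable measurableSet_ball) M
        (ae_restrict_of_forall_mem measurableSet_ball fun x hx =>
          hM x (ball_subset_ball hsρ hx)))
      (hosc _ ⟨mul_pos hs0 hρ, hsρ⟩)
  rw [setIntegral_congr_fun measurableSet_ball hradial, integral_integral_swap (by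
    rw [Measure.prod_restrict]
    exact integrableOn_ball_prod_Ioc_inner_comp_homothety μ hcont hM)]
  simpa using norm_setIntegral_le_of_norm_le_const (measure_Ioc_lt_top (μ := volume)) hslice

end InnerHaar

theorem averaged_linear_growth_general
    (N : ℕ)
    (X₀ : EuclideanSpace ℝ (Fin N)) (ρ K : ℝ) (hρ : 0 < ρ)
    (u : EuclideanSpace ℝ (Fin N) → ℝ)
    (hu : ContDiffOn ℝ 1 u (closedBall X₀ ρ))
    (hu0 : u X₀ = 0)
    (hosc : ∀ t ∈ Ioc (0:ℝ) ρ,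
      ∫ X in ball X₀ t, ‖gradient u X - ⨍ Y in ball X₀ t, gradient u Y‖ ≤ K * t ^ (N : ℝ)) :
    |∫ X in ball X₀ ρ, u X| ≤ K * ρ ^ ((N : ℝ) + 1) := by
  have key := abs_setIntegral_ball_le_of_gradient_oscillation volume hρ hu hu0 fun t ht => by
    rw [finrank_euclideanSpace_fin, ← Real.rpow_natCast]
    exact hosc t ht
  rwa [finrank_euclideanSpace_fin, ← Real.rpow_natCast, Nat.cast_succ] at key

/-- Averaged linear growth: if `u` is `C¹` on the closed ball
`B̄_ρ(X₀)`, vanishes at the center, and its gradient has `L¹`-oscillation at most `K t^N`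
on every concentric ball `B_t(X₀)`, `0 < t ≤ ρ`, then `|∫_{B_ρ(X₀)} u| ≤ K ρ^{N+1}`. -/
theorem averaged_linear_growth
    (N : ℕ) (hN : 1 ≤ N)
    (X₀ : EuclideanSpace ℝ (Fin N)) (ρ K : ℝ) (hρ : 0 < ρ) (hK : 0 ≤ K)
    (u : EuclideanSpace ℝ (Fin N) → ℝ)
    (hu : ContDiffOn ℝ 1 u (closedBall X₀ ρ))
    (hu0 : u X₀ = 0)
    (hosc : ∀ t ∈ Ioc (0:ℝ) ρ,
      ∫ X in ball X₀ t, ‖gradient u X - ⨍ Y in ball X₀ t, gradient u Y‖ ≤ K * t ^ (N : ℝ)) :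
    |∫ X in ball X₀ ρ, u X| ≤ K * ρ ^ ((N : ℝ) + 1) :=
  averaged_linear_growth_general N X₀ ρ K hρ u hu hu0 hosc
end
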